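/- arXiv:2401.02353 — 6 statements merged into one kernel-verified Lean document; each statement's English description precedes it below -/
import Mathlib

section
/- For a finite two-player game with payoff matrices U_A and U_B, if player B has a strictly dominant pure strategy x̃_B, then for any contract matrix D_A (modifying A's payoffs to U_A - D_A without changing B's payoffs), it is impossible that in some Nash equilibrium of the modified game both A's post-contract payoff strictly exceeds A's Nash equilibrium payoff in the original game and the expected transfer σ_A^T D_A x̃_B is strictly positive. -/
open Finset

/-- Mixed strategies over `n` pure strategies: nonnegative vectors summing to 1. -/
def mixed (n : ℕ) : Set (Fin n → ℝ) := {σ | (∀ i, 0 ≤ σ i) ∧ ∑ i, σ i = 1}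

/-- Expected payoff `σ_A^T U σ_B`. -/
def pay {m n : ℕ} (U : Fin m → Fin n → ℝ) (a : Fin m → ℝ) (b : Fin n → ℝ) : ℝ :=
  ∑ i, ∑ j, a i * U i j * b j

/-- The pure strategy `k` as a mixed strategy. -/
def pureStrat {n : ℕ} (k : Fin n) : Fin n → ℝ := fun i => if i = k then 1 else 0

/-- `b` is a best response of the column player (payoffs `UB`) to `a`. -/
def BRB {m n : ℕ} (UB : Fin m → Fin n → ℝ) (a : Fin m → ℝ) (b : Fin n → ℝ) : Prop :=
  b ∈ mixed n ∧ ∀ b' ∈ mixed n, pay UB a b' ≤ pay UB a b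

/-- `a` is a best response of the row player (payoffs `UA`) to `b`. -/
def BRA {m n : ℕ} (UA : Fin m → Fin n → ℝ) (a : Fin m → ℝ) (b : Fin n → ℝ) : Prop :=
  a ∈ mixed m ∧ ∀ a' ∈ mixed m, pay UA a' b ≤ pay UA a b

/-- Nash equilibrium of the bimatrix game `(UA, UB)`. -/
def NashEq {m n : ℕ} (UA UB : Fin m → Fin n → ℝ) (a : Fin m → ℝ) (b : Fin n → ℝ) : Prop :=
  a ∈ mixed m ∧ b ∈ mixed n ∧
  (∀ a' ∈ mixed m, pay UA a' b ≤ pay UA a b) ∧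
  (∀ b' ∈ mixed n, pay UB a b' ≤ pay UB a b)


lemma pure_mixed {n : ℕ} (k : Fin n) : pureStrat k ∈ mixed n := by
  constructor
  · intro i; unfold pureStrat; positivity
  · simp [pureStrat]

lemma pay_sub {m n : ℕ} (U D : Fin m → Fin n → ℝ) (a : Fin m → ℝ) (b : Fin n → ℝ) :
    pay (U - D) a b = pay U a b - pay D a b := by
  simp [pay, ← Finset.sum_sub_distrib, mul_sub, sub_mul]

lemma nash_b {m n : ℕ} (UA UB : Fin m → Fin n → ℝ) (xB : Fin n)
    (hdom : ∀ a ∈ mixed m, ∀ b ∈ mixed n, b ≠ pureStrat xB →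
      pay UB a b < pay UB a (pureStrat xB))
    (a : Fin m → ℝ) (b : Fin n → ℝ) (hne : NashEq UA UB a b) : b = pureStrat xB := by
  by_contra h
  have h1 := hdom a hne.1 b hne.2.1 h
  have h2 := hne.2.2.2 (pureStrat xB) (pure_mixed xB)
  linarith

/-- Proposition 3: if B has a strictly dominant pure strategy `xB`, then for any contract
`DA`, no Nash equilibrium of the post-contract game gives A a payoff strictly above A's
Nash-equilibrium payoff in the original game while also paying the miner a strictly
positive expected transfer. -/
theorem stmt_0 {m n : ℕ} (UA UB : Fin m → Fin n → ℝ) (xB : Fin n)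
    (hdom : ∀ a ∈ mixed m, ∀ b ∈ mixed n, b ≠ pureStrat xB →
      pay UB a b < pay UB a (pureStrat xB))
    (DA : Fin m → Fin n → ℝ)
    (a : Fin m → ℝ) (b : Fin n → ℝ) (hne : NashEq (UA - DA) UB a b)
    (a' : Fin m → ℝ) (b' : Fin n → ℝ) (hne' : NashEq UA UB a' b') :
    ¬ (pay (UA - DA) a b > pay UA a' b' ∧ pay DA a (pureStrat xB) > 0) := by
  rintro ⟨hgt, hpos⟩
  have hb : b = pureStrat xB := nash_b (UA - DA) UB xB hdom a b hne
  have hb' : b' = pureStrat xB := nash_b UA UB xB hdom a' b' hne'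
  have h1 : pay UA a (pureStrat xB) ≤ pay UA a' b' := by
    have := hne'.2.2.1 a hne.1
    rw [hb']; rwa [hb'] at this
  rw [hb, pay_sub] at hgt
  linarith
end

section
/- The maximum aggregate payoff M_A := max over contracts D_A of the maximum of {σ_A^T U_A σ_B : (σ_A, σ_B) ∈ NE(Γ(D_A))} equals max over mixed profiles (σ_A, σ_B) with σ_B a best response in Γ to σ_A of σ_A^T U_A σ_B. In particular, taking D_A = U_A (so A is indifferent over all outcomes) achieves this maximum as a Nash equilibrium payoff. -/
open Finset

/-- Proposition 1: the maximum aggregate payoff over all contracts equals the maximum of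
`σ_A^T U_A σ_B` over profiles with `σ_B` a best response to `σ_A` in `Γ`; moreover the
contract `D_A = U_A` (making A indifferent) achieves it in a Nash equilibrium. -/
theorem stmt_3 {m n : ℕ} (UA UB : Fin m → Fin n → ℝ) (V : ℝ)
    (hV : IsGreatest {v : ℝ | ∃ a ∈ mixed m, ∃ b : Fin n → ℝ,
        BRB UB a b ∧ v = pay UA a b} V) :
    IsGreatest {v : ℝ | ∃ DA : Fin m → Fin n → ℝ, ∃ (a : Fin m → ℝ) (b : Fin n → ℝ),
        NashEq (UA - DA) UB a b ∧ v = pay UA a b} V ∧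
    (∃ (a : Fin m → ℝ) (b : Fin n → ℝ),
        NashEq (UA - UA) UB a b ∧ pay UA a b = V) := by
  obtain ⟨⟨a0, ha0, b0, hBR0, hv0⟩, hub⟩ := hV
  have pay0 : ∀ (a : Fin m → ℝ) (b : Fin n → ℝ), pay (UA - UA) a b = 0 := by
    intro a b
    simp [pay, Pi.sub_apply]
  have hNE0 : NashEq (UA - UA) UB a0 b0 :=
    ⟨ha0, hBR0.1, fun a' _ => by simp [pay], hBR0.2⟩
  refine ⟨⟨⟨UA, a0, b0, hNE0, hv0⟩, ?_⟩, ⟨a0, b0, hNE0, hv0.symm⟩⟩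
  rintro v ⟨DA, a, b, hNE, rfl⟩
  exact hub ⟨a, hNE.1, b, ⟨hNE.2.1, hNE.2.2.2⟩, rfl⟩
end

section
/- In the 2×2 game with A's modified payoff matrix U_A^{D_A} = [[-0.5, 1.5+ε],[0, 1.5]] (for any ε > 0) and B's payoff matrix [[.5,0],[0,1]], there is a unique Nash equilibrium, and as ε → 0 this equilibrium converges to (σ_A, σ_B) = ((2/3,1/3), (0,1)) with A's pre-transfer aggregate payoff σ_A^T U_A σ_B converging to 5/3, where U_A = [[1,2],[0,1]]. -/
open Finset

lemma mixed_two {a : Fin 2 → ℝ} (h : a ∈ mixed 2) :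
    0 ≤ a 0 ∧ 0 ≤ a 1 ∧ a 0 + a 1 = 1 := by
  obtain ⟨h1, h2⟩ := h
  exact ⟨h1 0, h1 1, by simpa [Fin.sum_univ_two] using h2⟩

lemma pure_mem (k : Fin 2) : pureStrat k ∈ mixed 2 := by
  constructor
  · intro i; simp only [pureStrat]; split <;> norm_num
  · fin_cases k <;> simp [pureStrat, Fin.sum_univ_two]

lemma pay_expand (U : Fin 2 → Fin 2 → ℝ) (a b : Fin 2 → ℝ) :
    pay U a b = a 0 * U 0 0 * b 0 + a 0 * U 0 1 * b 1
      + a 1 * U 1 0 * b 0 + a 1 * U 1 1 * b 1 := by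
  simp [pay, Fin.sum_univ_two]; ring

lemma uniq_core (ε : ℝ) (hε : 0 < ε) (a b : Fin 2 → ℝ)
    (ha : a ∈ mixed 2) (hb : b ∈ mixed 2)
    (hA1 : pay ![![-(1/2), 3/2 + ε], ![0, (3:ℝ)/2]] (pureStrat 0) b ≤ pay ![![-(1/2), 3/2 + ε], ![0, (3:ℝ)/2]] a b)
    (hA2 : pay ![![-(1/2), 3/2 + ε], ![0, (3:ℝ)/2]] (pureStrat 1) b ≤ pay ![![-(1/2), 3/2 + ε], ![0, (3:ℝ)/2]] a b)
    (hB1 : pay ![![(1:ℝ)/2, 0], ![0, 1]] a (pureStrat 0) ≤ pay ![![(1:ℝ)/2, 0], ![0, 1]] a b)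
    (hB2 : pay ![![(1:ℝ)/2, 0], ![0, 1]] a (pureStrat 1) ≤ pay ![![(1:ℝ)/2, 0], ![0, 1]] a b) :
    a 0 = 2/3 ∧ a 1 = 1/3 ∧ b 0 = 2*ε/(2*ε+1) ∧ b 1 = 1/(2*ε+1) := by
  obtain ⟨hp0, hP0, hps⟩ := mixed_two ha
  obtain ⟨hq0, hQ0, hqs⟩ := mixed_two hb
  rw [pay_expand, pay_expand] at hA1 hA2 hB1 hB2
  simp [pureStrat, Matrix.cons_val_zero, Matrix.cons_val_one, Matrix.head_cons] at hA1 hA2 hB1 hB2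
  set p := a 0; set P := a 1; set q := b 0; set Q := b 1
  have hQpos : 0 < Q := by
    rcases lt_or_eq_of_le hQ0 with h | h
    · exact h
    · exfalso
      have hQz : Q = 0 := h.symm
      have hq1 : q = 1 := by linarith
      rw [hq1, hQz] at hA2 hB2
      ring_nf at hA2 hB2
      linarith
  have hqpos : 0 < q := by
    rcases lt_or_eq_of_le hq0 with h | h
    · exact h
    · exfalso
      have hqz : q = 0 := h.symm
      have hQ1 : Q = 1 := by linarith
      rw [hqz, hQ1] at hA1 hB1
      ring_nf at hA1 hB1
      nlinarith [mul_nonneg hP0 hε.le, hA1, hB1]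
  have hp : p = 2/3 := by nlinarith [hB1, hB2, hQpos, hqpos]
  have hP : P = 1/3 := by linarith
  have hq : ε * Q = q / 2 := by nlinarith [hA1, hA2]
  have hd : (0:ℝ) < 2*ε+1 := by linarith
  constructor; exact hp
  constructor; exact hP
  constructor
  · field_simp
    linear_combination (-2)*hq + (2*ε)*hqs
  · field_simp
    linear_combination 2*hq + hqs

/-- For every `ε > 0`, the game with A-payoffs `[[-1/2, 3/2+ε],[0, 3/2]]` and B-payoffs
`[[1/2,0],[0,1]]` has a unique Nash equilibrium, and as `ε → 0⁺` this equilibrium tends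
to `((2/3,1/3),(0,1))` with aggregate payoff `σ_A^T U_A σ_B` (for `U_A=[[1,2],[0,1]]`)
tending to `5/3`. -/
theorem stmt_6 :
    let UA : Fin 2 → Fin 2 → ℝ := ![![1, 2], ![0, 1]]
    let UB : Fin 2 → Fin 2 → ℝ := ![![1/2, 0], ![0, 1]]
    let UAd : ℝ → (Fin 2 → Fin 2 → ℝ) := fun ε => ![![-(1/2), 3/2 + ε], ![0, 3/2]]
    ∃ σ : ℝ → (Fin 2 → ℝ) × (Fin 2 → ℝ),
      (∀ ε > (0:ℝ),
        NashEq (UAd ε) UB (σ ε).1 (σ ε).2 ∧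
        ∀ (a : Fin 2 → ℝ) (b : Fin 2 → ℝ),
          NashEq (UAd ε) UB a b → (a, b) = σ ε) ∧
      Filter.Tendsto σ (nhdsWithin 0 (Set.Ioi 0))
        (nhds (![(2:ℝ)/3, 1/3], ![(0:ℝ), 1])) ∧
      Filter.Tendsto (fun ε => pay UA (σ ε).1 (σ ε).2) (nhdsWithin 0 (Set.Ioi 0))
        (nhds (5/3)) := by
  intro UA UB UAd
  refine ⟨fun ε => (![2/3, 1/3], ![2*ε/(2*ε+1), 1/(2*ε+1)]), ?_, ?_, ?_⟩
  · intro ε hε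
    have hd : (0:ℝ) < 2*ε+1 := by linarith
    have hd' : (2*ε+1) ≠ 0 := ne_of_gt hd
    constructor
    · refine ⟨⟨?_, ?_⟩, ⟨?_, ?_⟩, ?_, ?_⟩
      · intro i; fin_cases i <;> norm_num
      · simp [Fin.sum_univ_two]; norm_num
      · intro i; fin_cases i <;> simp <;> positivity
      · simp [Fin.sum_univ_two]; field_simp
      · intro a' ha'
        obtain ⟨hp0, hP0, hps⟩ := mixed_two ha'
        have h1' : a' 1 = 1 - a' 0 := by linarith
        apply le_of_eq
        rw [pay_expand, pay_expand]
        simp only [UAd, Matrix.cons_val_zero, Matrix.cons_val_one, Matrix.head_cons]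
        rw [h1']
        field_simp
        ring
      · intro b' hb'
        obtain ⟨hq0, hQ0, hqs⟩ := mixed_two hb'
        have h1' : b' 1 = 1 - b' 0 := by linarith
        apply le_of_eq
        rw [pay_expand, pay_expand]
        simp only [UB, Matrix.cons_val_zero, Matrix.cons_val_one, Matrix.head_cons]
        rw [h1']
        field_simp
        ring
    · intro a b hNE
      obtain ⟨ha, hb, hA, hB⟩ := hNE
      have h := uniq_core ε hε a b ha hb
        (hA _ (pure_mem 0)) (hA _ (pure_mem 1)) (hB _ (pure_mem 0)) (hB _ (pure_mem 1))
      obtain ⟨h1, h2, h3, h4⟩ := h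
      have hae : a = ![2/3, 1/3] := by
        funext i; fin_cases i <;> norm_num [h1, h2]
      have hbe : b = ![2*ε/(2*ε+1), 1/(2*ε+1)] := by
        funext i; fin_cases i <;> norm_num [h3, h4]
      simp [hae, hbe]
  · have h1 : Filter.Tendsto (fun ε : ℝ => 2*ε/(2*ε+1)) (nhdsWithin 0 (Set.Ioi 0)) (nhds 0) := by
      have : ContinuousAt (fun ε : ℝ => 2*ε/(2*ε+1)) 0 := by
        apply ContinuousAt.div
        · fun_prop
        · fun_prop
        · norm_num
      have h : Filter.Tendsto (fun ε : ℝ => 2*ε/(2*ε+1)) (nhdsWithin 0 (Set.Ioi 0))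
          (nhds (2*0/(2*0+1))) := this.tendsto.mono_left nhdsWithin_le_nhds
      simpa using h
    have h2 : Filter.Tendsto (fun ε : ℝ => 1/(2*ε+1)) (nhdsWithin 0 (Set.Ioi 0)) (nhds 1) := by
      have : ContinuousAt (fun ε : ℝ => 1/(2*ε+1)) 0 := by
        apply ContinuousAt.div
        · fun_prop
        · fun_prop
        · norm_num
      have h : Filter.Tendsto (fun ε : ℝ => 1/(2*ε+1)) (nhdsWithin 0 (Set.Ioi 0))
          (nhds (1/(2*0+1))) := this.tendsto.mono_left nhdsWithin_le_nhds
      simpa using h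
    rw [Prod.tendsto_iff]
    constructor
    · exact tendsto_const_nhds
    · rw [tendsto_pi_nhds]
      intro i
      fin_cases i
      · simpa using h1
      · simpa using h2
  · have h1 : Filter.Tendsto (fun ε : ℝ => 2*ε/(2*ε+1)) (nhdsWithin 0 (Set.Ioi 0)) (nhds 0) := by
      have hc : ContinuousAt (fun ε : ℝ => 2*ε/(2*ε+1)) 0 := by
        apply ContinuousAt.div
        · fun_prop
        · fun_prop
        · norm_num
      have h : Filter.Tendsto (fun ε : ℝ => 2*ε/(2*ε+1)) (nhdsWithin 0 (Set.Ioi 0))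
          (nhds (2*0/(2*0+1))) := hc.tendsto.mono_left nhdsWithin_le_nhds
      simpa using h
    have h2 : Filter.Tendsto (fun ε : ℝ => 5/3 - 2*ε/(2*ε+1)) (nhdsWithin 0 (Set.Ioi 0))
        (nhds (5/3)) := by
      have h := h1.const_sub (5/3 : ℝ)
      simpa using h
    apply h2.congr'
    filter_upwards [self_mem_nhdsWithin] with ε hε
    have hz : (2*ε+1) ≠ 0 := by
      have : (0:ℝ) < ε := hε
      linarith
    rw [pay_expand]
    simp only [UA, Matrix.cons_val_zero, Matrix.cons_val_one, Matrix.head_cons]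
    field_simp
    ring
end

section
/- In the 3×3 game where A's payoff matrix is [[0,0,5],[1,1,2],[0,0,2]] (original U_A = [[2,0,5],[1,1,2],[0,0,2]] minus contract D_A paying 2 at (x,x)) and B's payoff matrix is [[5,0,4],[3,2,0],[3,1,0]], the unique Nash equilibrium is the pure profile (y,x). -/
open Finset

/-- In the post-contract game with A-payoffs `[[0,0,5],[1,1,2],[0,0,2]]` and B-payoffs
`[[5,0,4],[3,2,0],[3,1,0]]`, the unique Nash equilibrium is the pure profile `(y,x)`. -/
theorem stmt_10 :
    let UA : Fin 3 → Fin 3 → ℝ := ![![0, 0, 5], ![1, 1, 2], ![0, 0, 2]]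
    let UB : Fin 3 → Fin 3 → ℝ := ![![5, 0, 4], ![3, 2, 0], ![3, 1, 0]]
    NashEq UA UB (pureStrat 1) (pureStrat 0) ∧
    ∀ (a : Fin 3 → ℝ) (b : Fin 3 → ℝ), NashEq UA UB a b →
      a = pureStrat 1 ∧ b = pureStrat 0 := by

  intro UA UB
  have hmem1 : pureStrat (1 : Fin 3) ∈ mixed 3 := by
    constructor
    · intro i; fin_cases i <;> simp [pureStrat]
    · simp [Fin.sum_univ_three, pureStrat]
  have hmem0 : pureStrat (0 : Fin 3) ∈ mixed 3 := by
    constructor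
    · intro i; fin_cases i <;> simp [pureStrat]
    · simp [Fin.sum_univ_three, pureStrat]
  constructor
  · refine ⟨hmem1, hmem0, ?_, ?_⟩
    · rintro a' ⟨ha, hs⟩
      have h0 := ha 0; have h1 := ha 1; have h2 := ha 2
      simp only [Fin.sum_univ_three] at hs
      simp [pay, Fin.sum_univ_three, pureStrat, UA, Matrix.cons_val_zero,
        Matrix.cons_val_one, Matrix.head_cons]
      linarith
    · rintro b' ⟨hb, hs⟩
      have h0 := hb 0; have h1 := hb 1; have h2 := hb 2
      simp only [Fin.sum_univ_three] at hs
      simp [pay, Fin.sum_univ_three, pureStrat, UB, Matrix.cons_val_zero,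
        Matrix.cons_val_one, Matrix.head_cons]
      linarith
  · rintro a b ⟨⟨ha, has⟩, ⟨hb, hbs⟩, hA, hB⟩
    have ha0 := ha 0; have ha1 := ha 1; have ha2 := ha 2
    have hb0 := hb 0; have hb1 := hb 1; have hb2 := hb 2
    simp only [Fin.sum_univ_three] at has hbs
    have hBe := hB (pureStrat 0) hmem0
    simp only [pay, Fin.sum_univ_three, pureStrat, UB, Matrix.cons_val_zero,
      Matrix.cons_val_one, Matrix.head_cons, Matrix.cons_val_two, Matrix.tail_cons] at hBe
    norm_num [show ((2:Fin 3) = 0) = False from by simp] at hBe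
    -- deduce b = pureStrat 0
    have hb1z : b 1 = 0 := by nlinarith [mul_nonneg hb1 ha0, mul_nonneg hb2 ha1, mul_nonneg hb2 ha2, mul_nonneg hb1 ha1, mul_nonneg hb1 ha2, mul_nonneg hb2 ha0]
    have hb2z : b 2 = 0 := by nlinarith [mul_nonneg hb1 ha0, mul_nonneg hb2 ha1, mul_nonneg hb2 ha2, mul_nonneg hb1 ha1, mul_nonneg hb1 ha2, mul_nonneg hb2 ha0]
    have hb0o : b 0 = 1 := by linarith
    have hAe := hA (pureStrat 1) hmem1
    simp only [pay, Fin.sum_univ_three, pureStrat, UA, Matrix.cons_val_zero,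
      Matrix.cons_val_one, Matrix.head_cons, Matrix.cons_val_two, Matrix.tail_cons] at hAe
    norm_num [hb0o, hb1z, hb2z] at hAe
    have ha1o : a 1 = 1 := by linarith
    have ha0z : a 0 = 0 := by linarith
    have ha2z : a 2 = 0 := by linarith
    constructor
    · funext i; fin_cases i <;> simp [pureStrat, ha0z, ha1o, ha2z]
    · funext i; fin_cases i <;> simp [pureStrat, hb0o, hb1z, hb2z]
end

section
/- In the game Γ(D_A, D_B) obtained from the symmetric 3×3 game (A payoffs [[5,1,1],[5,1,2],[6,2,3]], B payoffs the transpose) by subtracting D = [[2.99,-2,0],[3,-1,-3],[4,0.5,0]] from A's payoffs and D^T from B's payoffs, the unique Nash equilibrium is (x,x) with post-contract payoffs (2.01, 2.01), and the total transfer to the game miner at this equilibrium is 2·2.99 = 5.98. -/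
open Finset

/-!
B's post-contract matrix is the transpose of A's, `postContractA = [[2.01,3,1],[2,2,5],[2,1.5,3]]`,
so `(a, b)` is an equilibrium iff each of `a`, `b` is a best response to the other in `postContractA`.
A best response puts no weight on a pure strategy that some mixed strategy beats. Row 2 is beaten
by the mixture `(1/4, 3/4, 0)` against every column strategy, so both players drop strategy 2;
once column 2 is gone, row 1 is beaten by row 0, so both players drop strategy 1 too.
-/

section Bimatrix

variable {m n : ℕ}

lemma pureStrat_mem_mixed (k : Fin n) : pureStrat k ∈ mixed n :=
  ⟨fun i => by unfold pureStrat; split_ifs <;> norm_num, by simp [pureStrat]⟩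

lemma eq_pureStrat_of_mem_mixed {a : Fin n → ℝ} {k : Fin n} (ha : a ∈ mixed n)
    (hzero : ∀ i, i ≠ k → a i = 0) : a = pureStrat k := by
  have hk : a k = 1 := by
    rw [← ha.2, Finset.sum_eq_single k (fun i _ hi => hzero i hi) (by simp)]
  funext i
  by_cases hi : i = k
  · subst hi; simp [pureStrat, hk]
  · simp [pureStrat, hi, hzero i hi]

lemma pay_pureStrat_left (U : Fin m → Fin n → ℝ) (k : Fin m) (b : Fin n → ℝ) :
    pay U (pureStrat k) b = ∑ j, U k j * b j := by
  simp [pay, pureStrat]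

lemma pay_pureStrat_right (U : Fin m → Fin n → ℝ) (a : Fin m → ℝ) (l : Fin n) :
    pay U a (pureStrat l) = ∑ i, a i * U i l := by
  simp [pay, pureStrat]

lemma pay_pureStrat_pureStrat (U : Fin m → Fin n → ℝ) (k : Fin m) (l : Fin n) :
    pay U (pureStrat k) (pureStrat l) = U k l := by
  simp [pay_pureStrat_left, pureStrat]

lemma pay_eq_sum_pay_pureStrat (U : Fin m → Fin n → ℝ) (a : Fin m → ℝ) (b : Fin n → ℝ) :
    pay U a b = ∑ i, a i * pay U (pureStrat i) b := by
  simp_rw [pay_pureStrat_left, Finset.mul_sum, ← mul_assoc]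
  rfl

lemma pay_transpose (U : Fin m → Fin n → ℝ) (a : Fin n → ℝ) (b : Fin m → ℝ) :
    pay (fun i j => U j i) a b = pay U b a := by
  simp only [pay]
  rw [Finset.sum_comm]
  exact Finset.sum_congr rfl fun _ _ => Finset.sum_congr rfl fun _ _ => by ring

lemma nashEq_transpose_iff (U : Fin n → Fin n → ℝ) (a b : Fin n → ℝ) :
    NashEq U (fun i j => U j i) a b ↔ BRA U a b ∧ BRA U b a := by
  simp only [NashEq, BRA, pay_transpose]
  tauto

lemma bra_pureStrat_of_le {U : Fin m → Fin n → ℝ} {k : Fin m} {l : Fin n}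
    (h : ∀ i, U i l ≤ U k l) : BRA U (pureStrat k) (pureStrat l) := by
  refine ⟨pureStrat_mem_mixed k, fun a' ha' => ?_⟩
  rw [pay_pureStrat_right, pay_pureStrat_pureStrat]
  calc ∑ i, a' i * U i l ≤ ∑ i, a' i * U k l :=
        Finset.sum_le_sum fun i _ => mul_le_mul_of_nonneg_left (h i) (ha'.1 i)
    _ = U k l := by rw [← Finset.sum_mul, ha'.2, one_mul]

/-- Since `pay U a b` is the `a`-average of the pure payoffs, none of which exceeds it, every pure
strategy played with positive weight attains it; a pure strategy beaten by some `w` does not. -/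
lemma BRA.eq_zero_of_lt {U : Fin m → Fin n → ℝ} {a w : Fin m → ℝ} {b : Fin n → ℝ} {k : Fin m}
    (h : BRA U a b) (hw : w ∈ mixed m) (hlt : pay U (pureStrat k) b < pay U w b) : a k = 0 := by
  obtain ⟨⟨ha_nonneg, ha_sum⟩, hbest⟩ := h
  set V := pay U a b
  have hgap : ∀ i, 0 ≤ a i * (V - pay U (pureStrat i) b) := fun i =>
    mul_nonneg (ha_nonneg i) (sub_nonneg.2 (hbest _ (pureStrat_mem_mixed i)))
  have hsum : ∑ i, a i * (V - pay U (pureStrat i) b) = 0 := by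
    simp only [mul_sub, Finset.sum_sub_distrib, ← Finset.sum_mul, ha_sum, one_mul, V]
    rw [← pay_eq_sum_pay_pureStrat, sub_self]
  have hk := (Finset.sum_eq_zero_iff_of_nonneg fun i _ => hgap i).1 hsum k (Finset.mem_univ k)
  have hpos : 0 < V - pay U (pureStrat k) b := by linarith [hbest w hw]
  exact (mul_eq_zero.1 hk).resolve_right hpos.ne'

end Bimatrix

section PostContract

noncomputable def postContractA : Fin 3 → Fin 3 → ℝ := ![![201/100, 3, 1], ![2, 2, 5], ![2, 3/2, 3]]

lemma BRA.postContractA_two_eq_zero {a b : Fin 3 → ℝ} (h : BRA postContractA a b)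
    (hb : b ∈ mixed 3) : a 2 = 0 := by
  have hw : ![1/4, 3/4, 0] ∈ mixed 3 :=
    ⟨fun i => by fin_cases i <;> norm_num [Matrix.cons_val], by simp [Fin.sum_univ_three]; norm_num⟩
  have hpay2 : pay postContractA (pureStrat 2) b = 2 * b 0 + 3/2 * b 1 + 3 * b 2 := by
    simp [pay_pureStrat_left, Fin.sum_univ_three, postContractA]
  have hpay_w : pay postContractA ![1/4, 3/4, 0] b = 801/400 * b 0 + 9/4 * b 1 + 4 * b 2 := by
    simp [pay, Fin.sum_univ_three, postContractA]
    ring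
  have hb_sum : b 0 + b 1 + b 2 = 1 := by simpa [Fin.sum_univ_three] using hb.2
  refine h.eq_zero_of_lt hw ?_
  rw [hpay2, hpay_w]
  linarith [hb.1 0, hb.1 1, hb.1 2]

lemma BRA.postContractA_one_eq_zero {a b : Fin 3 → ℝ} (h : BRA postContractA a b)
    (hb : b ∈ mixed 3) (hb2 : b 2 = 0) : a 1 = 0 := by
  have hpay0 : pay postContractA (pureStrat 0) b = 201/100 * b 0 + 3 * b 1 + b 2 := by
    simp [pay_pureStrat_left, Fin.sum_univ_three, postContractA]
  have hpay1 : pay postContractA (pureStrat 1) b = 2 * b 0 + 2 * b 1 + 5 * b 2 := by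
    simp [pay_pureStrat_left, Fin.sum_univ_three, postContractA]
  have hb_sum : b 0 + b 1 + b 2 = 1 := by simpa [Fin.sum_univ_three] using hb.2
  refine h.eq_zero_of_lt (pureStrat_mem_mixed 0) ?_
  rw [hpay0, hpay1]
  linarith [hb.1 0, hb.1 1]

lemma eq_pureStrat_zero_of_bra_postContractA {a b : Fin 3 → ℝ} (hab : BRA postContractA a b)
    (hba : BRA postContractA b a) : a = pureStrat 0 ∧ b = pureStrat 0 := by
  have ha2 := hab.postContractA_two_eq_zero hba.1
  have hb2 := hba.postContractA_two_eq_zero hab.1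
  have ha1 := hab.postContractA_one_eq_zero hba.1 hb2
  have hb1 := hba.postContractA_one_eq_zero hab.1 ha2
  exact ⟨eq_pureStrat_of_mem_mixed hab.1 fun i hi => by fin_cases i; exacts [absurd rfl hi, ha1, ha2],
    eq_pureStrat_of_mem_mixed hba.1 fun i hi => by fin_cases i; exacts [absurd rfl hi, hb1, hb2]⟩

end PostContract

/-- In `Γ(D_A, D_B)` from the "G makes offers" example: subtracting `D_A` from A's
payoffs and `D_A^T` from B's payoffs (`B`'s original payoffs being the transpose of A's),
the unique Nash equilibrium is `(x,x)` with post-contract payoffs `(2.01, 2.01)`, and the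
total transfer to the miner at that outcome is `5.98`. -/
theorem stmt_14 :
    let UA : Fin 3 → Fin 3 → ℝ := ![![5, 1, 1], ![5, 1, 2], ![6, 2, 3]]
    let DA : Fin 3 → Fin 3 → ℝ := ![![299/100, -2, 0], ![3, -1, -3], ![4, 1/2, 0]]
    let UB : Fin 3 → Fin 3 → ℝ := fun i j => UA j i
    let DB : Fin 3 → Fin 3 → ℝ := fun i j => DA j i
    NashEq (UA - DA) (UB - DB) (pureStrat 0) (pureStrat 0) ∧
    (∀ (a : Fin 3 → ℝ) (b : Fin 3 → ℝ), NashEq (UA - DA) (UB - DB) a b →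
      a = pureStrat 0 ∧ b = pureStrat 0) ∧
    pay (UA - DA) (pureStrat 0) (pureStrat 0) = 201/100 ∧
    pay (UB - DB) (pureStrat 0) (pureStrat 0) = 201/100 ∧
    pay (DA + DB) (pureStrat 0) (pureStrat 0) = 598/100 := by
  intro UA DA UB DB
  have hA : UA - DA = postContractA := by
    funext i j
    fin_cases i <;> fin_cases j <;> norm_num [UA, DA, postContractA]
  have hB : UB - DB = fun i j => postContractA j i := by
    rw [← hA]
    rfl
  have hpure : BRA postContractA (pureStrat 0) (pureStrat 0) :=
    bra_pureStrat_of_le fun i => by fin_cases i <;> norm_num [postContractA]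
  simp only [hA, hB, nashEq_transpose_iff, pay_pureStrat_pureStrat]
  refine ⟨⟨hpure, hpure⟩, fun a b h => eq_pureStrat_zero_of_bra_postContractA h.1 h.2, ?_, ?_, ?_⟩ <;>
    norm_num [postContractA, DA, DB]
end

section
/- Suppose the game miner offers contracts (D_A, D_B) such that accepting is a weakly dominant strategy for each player in the induced acceptance game (i.e., each player i weakly prefers the equilibrium of the game with both contracts to the equilibrium with only j's contract, and the game with only i's contract to the original game). Then the miner's profit s_A^T(D_A + D_B)s_B at the equilibrium of Γ(D_A, D_B) is at most max_{x_A,x_B} x_A^T(U_A+U_B)x_B − min{x'_A^T U_A x'_B : x'_A ∈ R_A(x'_B)} − min{x''_A^T U_B x''_B : x''_B ∈ R_B(x''_A)}. -/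
open Finset

lemma pay_add {m n : ℕ} (U U' : Fin m → Fin n → ℝ) (a : Fin m → ℝ) (b : Fin n → ℝ) :
    pay (U + U') a b = pay U a b + pay U' a b := by
  simp [pay, mul_add, add_mul, Finset.sum_add_distrib]

lemma pay_le_max {m n : ℕ} (U : Fin m → Fin n → ℝ) (a : Fin m → ℝ) (b : Fin n → ℝ)
    (ha : a ∈ mixed m) (hb : b ∈ mixed n) (V : ℝ) (hV : ∀ i j, U i j ≤ V) :
    pay U a b ≤ V := by
  obtain ⟨ha0, ha1⟩ := ha
  obtain ⟨hb0, hb1⟩ := hb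
  have : pay U a b ≤ ∑ i, ∑ j, a i * V * b j := by
    apply Finset.sum_le_sum; intro i _
    apply Finset.sum_le_sum; intro j _
    have := mul_le_mul_of_nonneg_left (hV i j) (ha0 i)
    exact mul_le_mul_of_nonneg_right this (hb0 j)
  calc pay U a b ≤ ∑ i, ∑ j, a i * V * b j := this
    _ = (∑ i, a i) * V * (∑ j, b j) := by
        rw [Finset.sum_mul, Finset.sum_mul]
        congr 1; ext i
        rw [← Finset.mul_sum]
    _ = V := by rw [ha1, hb1]; ring

/-- Proposition 7: if accepting is weakly dominant for both players, the miner's profit at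
the equilibrium of `Γ(D_A, D_B)` is at most
`max_{x_A,x_B} x_A^T (U_A + U_B) x_B − min{pay U_A over A-best-response profiles}
− min{pay U_B over B-best-response profiles}`. -/
theorem stmt_15 {m n : ℕ} (UA UB DA DB : Fin m → Fin n → ℝ)
    (aAB : Fin m → ℝ) (bAB : Fin n → ℝ)
    (a0B : Fin m → ℝ) (b0B : Fin n → ℝ)
    (aA0 : Fin m → ℝ) (bA0 : Fin n → ℝ)
    (h1 : NashEq (UA - DA) (UB - DB) aAB bAB)
    (h2 : NashEq UA (UB - DB) a0B b0B)
    (h3 : NashEq (UA - DA) UB aA0 bA0)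
    (hAacc : pay (UA - DA) aAB bAB ≥ pay UA a0B b0B)
    (hBacc : pay (UB - DB) aAB bAB ≥ pay UB aA0 bA0)
    (V mA mB : ℝ)
    (hV : IsGreatest {v : ℝ | ∃ (i : Fin m) (j : Fin n), v = UA i j + UB i j} V)
    (hmA : IsLeast {v : ℝ | ∃ (a : Fin m → ℝ) (b : Fin n → ℝ),
        b ∈ mixed n ∧ BRA UA a b ∧ v = pay UA a b} mA)
    (hmB : IsLeast {v : ℝ | ∃ (a : Fin m → ℝ) (b : Fin n → ℝ),
        a ∈ mixed m ∧ BRB UB a b ∧ v = pay UB a b} mB) :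
    pay (DA + DB) aAB bAB ≤ V - mA - mB := by
  obtain ⟨haAB, hbAB, _, _⟩ := h1
  obtain ⟨ha0B, hb0B, hbrA, _⟩ := h2
  obtain ⟨haA0, hbA0, _, hbrB⟩ := h3
  have hmA' : mA ≤ pay UA a0B b0B := hmA.2 ⟨a0B, b0B, hb0B, ⟨ha0B, hbrA⟩, rfl⟩
  have hmB' : mB ≤ pay UB aA0 bA0 := hmB.2 ⟨aA0, bA0, haA0, ⟨hbA0, hbrB⟩, rfl⟩
  have hVbound : pay (UA + UB) aAB bAB ≤ V :=
    pay_le_max _ _ _ haAB hbAB V (fun i j => hV.2 ⟨i, j, rfl⟩)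
  have e1 : pay (DA + DB) aAB bAB
      = pay (UA + UB) aAB bAB - pay (UA - DA) aAB bAB - pay (UB - DB) aAB bAB := by
    rw [pay_add, pay_add, pay_sub, pay_sub]; ring
  rw [e1]
  have h4 : mA ≤ pay (UA - DA) aAB bAB := le_trans hmA' hAacc
  have h5 : mB ≤ pay (UB - DB) aAB bAB := le_trans hmB' hBacc
  linarith
end
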